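/- arXiv:1004.1029 — 3 statements merged into one kernel-verified Lean document; each statement's English description precedes it below -/
import Mathlib

section
/- For f continuously differentiable on [0,∞) with f and f' of exponential order, and 0 < α < 1, the Laplace transform of the Caputo derivative ᶜD^α f satisfies L{ᶜD^α f}(s) = s^α L{f}(s) − s^(α−1) f(0), for s sufficiently large. -/
/-!
Multiplying by `exp (-s t)` and extending by zero to `ℝ` turns the Caputo derivative into
`1 / Γ(1 - α)` times the convolution of the kernel `v ^ (-α)` with `f'`, so its Laplace
transform is the product of the two Laplace transforms. The kernel transforms to
`Γ(1 - α) s ^ (α - 1)` by the Gamma integral, and `f'` to `s L{f}(s) - f 0` by integration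
by parts; both integrals converge as soon as `s` exceeds the exponential order and `0`.
-/

open MeasureTheory Real Set

/-- Caputo fractional derivative of order `α`, for `0 < α < 1`. -/
noncomputable def caputoDeriv (α : ℝ) (f : ℝ → ℝ) (t : ℝ) : ℝ :=
  (1 / Real.Gamma (1 - α)) * ∫ s in (0:ℝ)..t, (t - s) ^ (-α) * deriv f s

/-- Laplace transform of `f`. -/
noncomputable def laplace (f : ℝ → ℝ) (s : ℝ) : ℝ :=
  ∫ t in Set.Ioi (0:ℝ), Real.exp (-s * t) * f t

open Filter Topology Convolution ContinuousLinearMap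

lemma laplace_const_mul (c : ℝ) (g : ℝ → ℝ) (s : ℝ) :
    laplace (fun t => c * g t) s = c * laplace g s := by
  simp only [laplace, mul_left_comm _ c, integral_const_mul]

lemma laplace_eq_integral_indicator (g : ℝ → ℝ) (s : ℝ) :
    laplace g s = ∫ t, (Ioi 0).indicator (fun t => exp (-s * t) * g t) t :=
  (integral_indicator measurableSet_Ioi).symm

section Convolution

variable {k g : ℝ → ℝ} {s : ℝ}

lemma indicator_exp_mul_mul_indicator_exp_mul_sub (t u : ℝ) :
    (Ioi 0).indicator (fun t => exp (-s * t) * g t) u *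
        (Ioi 0).indicator (fun t => exp (-s * t) * k t) (t - u) =
      (Ioo 0 t).indicator (fun u => exp (-s * t) * (k (t - u) * g u)) u := by
  simp only [indicator_apply, mem_Ioi, mem_Ioo, sub_pos]
  split_ifs
  · rw [show exp (-s * t) = exp (-s * u) * exp (-s * (t - u)) by rw [← exp_add]; ring_nf]
    ring
  all_goals first | (exfalso; tauto) | ring

lemma indicator_exp_mul_intervalIntegral_eq_convolution (t : ℝ) :
    (Ioi 0).indicator (fun t => exp (-s * t) * ∫ u in (0 : ℝ)..t, k (t - u) * g u) t =
      ((Ioi 0).indicator (fun t => exp (-s * t) * g t) ⋆[mul ℝ ℝ]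
        (Ioi 0).indicator (fun t => exp (-s * t) * k t)) t := by
  rw [convolution_mul, funext (indicator_exp_mul_mul_indicator_exp_mul_sub t),
    integral_indicator measurableSet_Ioo]
  rcases le_or_gt t 0 with ht | ht
  · rw [indicator_of_notMem (notMem_Ioi.2 ht), Ioo_eq_empty ht.not_gt, Measure.restrict_empty,
      integral_zero_measure]
  · rw [indicator_of_mem (mem_Ioi.2 ht), ← integral_Ioc_eq_integral_Ioo,
      ← intervalIntegral.integral_of_le ht.le, intervalIntegral.integral_const_mul]

theorem laplace_convolution (hk : IntegrableOn (fun t => exp (-s * t) * k t) (Ioi 0))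
    (hg : IntegrableOn (fun t => exp (-s * t) * g t) (Ioi 0)) :
    laplace (fun t => ∫ u in (0 : ℝ)..t, k (t - u) * g u) s = laplace k s * laplace g s := by
  rw [laplace_eq_integral_indicator, funext indicator_exp_mul_intervalIntegral_eq_convolution,
    integral_convolution (mul ℝ ℝ) ((integrable_indicator_iff measurableSet_Ioi).2 hg)
      ((integrable_indicator_iff measurableSet_Ioi).2 hk),
    laplace_eq_integral_indicator k, laplace_eq_integral_indicator g, mul_apply', mul_comm]

end Convolution

lemma integrableOn_exp_mul_rpow_neg {α s : ℝ} (hα : α < 1) (hs : 0 < s) :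
    IntegrableOn (fun t => exp (-s * t) * t ^ (-α)) (Ioi 0) := by
  simpa only [rpow_one, mul_comm] using
    integrableOn_rpow_mul_exp_neg_mul_rpow (p := 1) (by linarith : -1 < -α) one_pos hs

theorem laplace_rpow_neg {α s : ℝ} (hα : α < 1) (hs : 0 < s) :
    laplace (fun t => t ^ (-α)) s = Gamma (1 - α) * s ^ (α - 1) := by
  have hGamma := integral_rpow_mul_exp_neg_mul_Ioi (sub_pos.2 hα) hs
  simp only [sub_sub_cancel_left, neg_mul_eq_neg_mul] at hGamma
  rw [laplace]
  simp_rw [mul_comm (exp _)]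
  rw [hGamma, one_div, inv_rpow hs.le, ← rpow_neg hs.le, neg_sub, mul_comm]

theorem laplace_deriv {f : ℝ → ℝ} {s : ℝ} (hf : ContinuousOn f (Ici 0))
    (hdf : DifferentiableOn ℝ f (Ioi 0))
    (hfs : IntegrableOn (fun t => exp (-s * t) * f t) (Ioi 0))
    (hdfs : IntegrableOn (fun t => exp (-s * t) * deriv f t) (Ioi 0))
    (hlim : Tendsto (fun t => exp (-s * t) * f t) atTop (𝓝 0)) :
    laplace (deriv f) s = s * laplace f s - f 0 := by
  have hexp (t : ℝ) : HasDerivAt (fun t => exp (-s * t)) (-s * exp (-s * t)) t := by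
    simpa [mul_comm] using ((hasDerivAt_id t).const_mul (-s)).exp
  have hzero : Tendsto (fun t => exp (-s * t) * f t) (𝓝[>] 0) (𝓝 (f 0)) := by
    have hcont : ContinuousWithinAt (fun t => exp (-s * t) * f t) (Ici 0) 0 :=
      (by fun_prop : Continuous fun t => exp (-s * t)).continuousWithinAt.mul
        (hf 0 self_mem_Ici)
    simpa using (hcont.mono Ioi_subset_Ici_self).tendsto
  have hparts := integral_Ioi_mul_deriv_eq_deriv_mul (fun t _ => hexp t)
    (fun t ht => (hdf.differentiableAt (Ioi_mem_nhds ht)).hasDerivAt) hdfs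
    (IntegrableOn.congr_fun (hfs.const_mul (-s)) (fun t _ => by simp only [Pi.mul_apply]; ring)
      measurableSet_Ioi) hzero hlim
  simp only [mul_assoc, integral_const_mul] at hparts
  rw [laplace, laplace, hparts]
  ring

section ExponentialOrder

variable {g : ℝ → ℝ} {M a s : ℝ}

lemma norm_exp_mul_le_of_abs_le (hg : ∀ t, 0 ≤ t → |g t| ≤ M * exp (a * t)) {t : ℝ}
    (ht : 0 ≤ t) : ‖exp (-s * t) * g t‖ ≤ M * exp (-(s - a) * t) :=
  calc ‖exp (-s * t) * g t‖ = exp (-s * t) * |g t| := by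
        rw [norm_mul, norm_of_nonneg (exp_pos _).le, Real.norm_eq_abs]
    _ ≤ exp (-s * t) * (M * exp (a * t)) := by gcongr; exact hg t ht
    _ = M * exp (-(s - a) * t) := by rw [mul_left_comm, ← exp_add]; ring_nf

lemma integrableOn_exp_mul_of_abs_le (hs : a < s)
    (hgm : AEStronglyMeasurable g (volume.restrict (Ioi 0)))
    (hg : ∀ t, 0 ≤ t → |g t| ≤ M * exp (a * t)) :
    IntegrableOn (fun t => exp (-s * t) * g t) (Ioi 0) := by
  refine Integrable.mono' ((exp_neg_integrableOn_Ioi 0 (sub_pos.2 hs)).const_mul M)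
    ((by fun_prop : Continuous fun t => exp (-s * t)).aestronglyMeasurable.mul hgm) ?_
  filter_upwards [ae_restrict_mem measurableSet_Ioi] with t ht
  exact norm_exp_mul_le_of_abs_le hg (le_of_lt ht)

lemma tendsto_exp_mul_of_abs_le (hs : a < s) (hg : ∀ t, 0 ≤ t → |g t| ≤ M * exp (a * t)) :
    Tendsto (fun t => exp (-s * t) * g t) atTop (𝓝 0) := by
  have hdecay : Tendsto (fun t => M * exp (-(s - a) * t)) atTop (𝓝 0) := by
    simpa only [neg_mul, Function.comp_def, id, mul_zero] using
      (tendsto_exp_neg_atTop_nhds_zero.comp (tendsto_id.const_mul_atTop (sub_pos.2 hs))).const_mul M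
  exact squeeze_zero_norm' ((eventually_ge_atTop 0).mono
    fun t ht => norm_exp_mul_le_of_abs_le hg ht) hdecay

theorem laplace_deriv_of_abs_le (hs : a < s) {f : ℝ → ℝ} (hf : ContDiffOn ℝ 1 f (Ici 0))
    (hexp : ∀ t, 0 ≤ t → |f t| ≤ M * exp (a * t))
    (hexp' : ∀ t, 0 ≤ t → |deriv f t| ≤ M * exp (a * t)) :
    laplace (deriv f) s = s * laplace f s - f 0 :=
  laplace_deriv hf.continuousOn
    ((hf.differentiableOn one_ne_zero).mono Ioi_subset_Ici_self)
    (integrableOn_exp_mul_of_abs_le hs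
      ((hf.continuousOn.mono Ioi_subset_Ici_self).aestronglyMeasurable measurableSet_Ioi) hexp)
    (integrableOn_exp_mul_of_abs_le hs (measurable_deriv f).aestronglyMeasurable hexp')
    (tendsto_exp_mul_of_abs_le hs hexp)

end ExponentialOrder

theorem laplace_caputo_general (α : ℝ) (hα1 : α < 1)
    (f : ℝ → ℝ) (hf : ContDiffOn ℝ 1 f (Set.Ici 0))
    (M a : ℝ)
    (hexp : ∀ t : ℝ, 0 ≤ t → |f t| ≤ M * Real.exp (a * t))
    (hexp' : ∀ t : ℝ, 0 ≤ t → |deriv f t| ≤ M * Real.exp (a * t)) :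
    ∃ s₀ : ℝ, ∀ s : ℝ, s₀ < s →
      laplace (caputoDeriv α f) s = s ^ α * laplace f s - s ^ (α - 1) * f 0 := by
  refine ⟨max a 0, fun s hs => ?_⟩
  obtain ⟨has, hs0⟩ := max_lt_iff.1 hs
  have hconv : laplace (fun t => ∫ u in (0 : ℝ)..t, (t - u) ^ (-α) * deriv f u) s =
      Gamma (1 - α) * s ^ (α - 1) * (s * laplace f s - f 0) := by
    rw [laplace_convolution (k := fun v => v ^ (-α)) (integrableOn_exp_mul_rpow_neg hα1 hs0)
        (integrableOn_exp_mul_of_abs_le has (measurable_deriv f).aestronglyMeasurable hexp'),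
      laplace_rpow_neg hα1 hs0, laplace_deriv_of_abs_le has hf hexp hexp']
  have hGamma : Gamma (1 - α) ≠ 0 := (Gamma_pos_of_pos (sub_pos.2 hα1)).ne'
  unfold caputoDeriv
  rw [laplace_const_mul, hconv, rpow_sub_one hs0.ne']
  field_simp

theorem laplace_caputo (α : ℝ) (hα : 0 < α) (hα1 : α < 1)
    (f : ℝ → ℝ) (hf : ContDiffOn ℝ 1 f (Set.Ici 0))
    (M a : ℝ) (hM : 0 < M)
    (hexp : ∀ t : ℝ, 0 ≤ t → |f t| ≤ M * Real.exp (a * t))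
    (hexp' : ∀ t : ℝ, 0 ≤ t → |deriv f t| ≤ M * Real.exp (a * t)) :
    ∃ s₀ : ℝ, ∀ s : ℝ, s₀ < s →
      laplace (caputoDeriv α f) s = s ^ α * laplace f s - s ^ (α - 1) * f 0 :=
  laplace_caputo_general α hα1 f hf M a hexp hexp'
end

section
/- For 0 < α < 1 and λ ∈ ℝ, the Caputo fractional derivative of the Mittag-Leffler function t ↦ E_α(λ t^α) equals λ E_α(λ t^α) for t > 0, where E_α(z) = Σ_{k≥0} z^k / Γ(αk + 1). -/
open MeasureTheory Real

/-- The (one-parameter) Mittag-Leffler function `E_α(z) = ∑ zᵏ / Γ(αk+1)`. -/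
noncomputable def mittagLeffler (α : ℝ) (z : ℝ) : ℝ :=
  ∑' k : ℕ, z ^ k / Real.Gamma (α * k + 1)

/-! Expanding `E_α(λ u^α) = ∑ λᵏ u^{αk} / Γ(αk + 1)`, the Beta integral gives the Caputo
derivative of each term: `u^{αk} / Γ(αk + 1) ↦ t^{α(k-1)} / Γ(α(k-1) + 1)` for `k ≥ 1`, while the
constant term `k = 0` is killed. Summing shifts the series by one index, which produces the
factor `λ`. Both interchanges of the sum with `d/du` and with `∫` rest on the summability of
`xᵏ / Γ(αk + β)`; by the ratio test this follows from `Γ(w) / Γ(w + α) → 0`, a consequence of the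
log-convexity of `Γ`. -/

open Filter Topology Set

namespace Real

theorem Gamma_add_one_sub_le_rpow_mul_Gamma {α x : ℝ} (hα0 : 0 < α) (hα1 : α < 1) (hx : 0 < x) :
    Gamma (x + 1 - α) ≤ x ^ (1 - α) * Gamma x := by
  have hconv := Gamma_mul_add_mul_le_rpow_Gamma_mul_rpow_Gamma hx (by linarith : 0 < x + 1)
    hα0 (by linarith : 0 < 1 - α) (by ring)
  have hΓ : 0 ≤ Gamma x := (Gamma_pos_of_pos hx).le
  calc Gamma (x + 1 - α) = Gamma (α * x + (1 - α) * (x + 1)) := by ring_nf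
    _ ≤ Gamma x ^ α * Gamma (x + 1) ^ (1 - α) := hconv
    _ = x ^ (1 - α) * Gamma x := by
      rw [Gamma_add_one hx.ne', mul_rpow hx.le hΓ, mul_left_comm, ← rpow_add' hΓ (by norm_num),
        add_sub_cancel, rpow_one]

theorem tendsto_Gamma_div_Gamma_add_atTop {α : ℝ} (hα0 : 0 < α) (hα1 : α < 1) :
    Tendsto (fun w => Gamma w / Gamma (w + α)) atTop (𝓝 0) := by
  have hlim : Tendsto (fun w => (1 + α / w) * (w + α) ^ (-α)) atTop (𝓝 0) := by
    simpa using (tendsto_const_nhds.add (tendsto_const_nhds.div_atTop tendsto_id)).mul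
      ((tendsto_rpow_neg_atTop hα0).comp (tendsto_atTop_add_const_right _ α tendsto_id))
  refine tendsto_of_tendsto_of_tendsto_of_le_of_le' tendsto_const_nhds hlim ?_ ?_
  · filter_upwards [eventually_gt_atTop 0] with w hw
    have := Gamma_pos_of_pos hw
    have := Gamma_pos_of_pos (by linarith : 0 < w + α)
    positivity
  · filter_upwards [eventually_gt_atTop 0] with w hw
    have hwα : 0 < w + α := by linarith
    have hle := Gamma_add_one_sub_le_rpow_mul_Gamma hα0 hα1 hwα
    rw [show w + α + 1 - α = w + 1 by ring, Gamma_add_one hw.ne', rpow_sub hwα, rpow_one] at hle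
    have := rpow_pos_of_pos hwα α
    rw [div_le_iff₀ (Gamma_pos_of_pos hwα), rpow_neg hwα.le]
    calc Gamma w = w * Gamma w / w := by field_simp
      _ ≤ (w + α) / (w + α) ^ α * Gamma (w + α) / w := by gcongr
      _ = _ := by field_simp

theorem summable_pow_div_Gamma_mul_add {α : ℝ} (hα0 : 0 < α) (hα1 : α < 1) (β x : ℝ) :
    Summable fun k : ℕ => x ^ k / Gamma (α * k + β) := by
  have hw : Tendsto (fun k : ℕ => α * k + β) atTop atTop :=
    tendsto_atTop_add_const_right _ β (tendsto_natCast_atTop_atTop.const_mul_atTop hα0)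
  have hratio : Tendsto (fun k : ℕ => ‖x‖ * (Gamma (α * k + β) / Gamma (α * k + β + α)))
      atTop (𝓝 0) := by
    simpa using ((tendsto_Gamma_div_Gamma_add_atTop hα0 hα1).comp hw).const_mul ‖x‖
  refine summable_of_ratio_norm_eventually_le (r := 1 / 2) (by norm_num) ?_
  filter_upwards [hratio.eventually (ge_mem_nhds (by norm_num : (0 : ℝ) < 1 / 2)),
    hw.eventually_gt_atTop 0] with k hk hpos
  have hΓ := Gamma_pos_of_pos hpos
  have hΓα := Gamma_pos_of_pos (by linarith : 0 < α * k + β + α)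
  rw [show α * ↑(k + 1) + β = α * k + β + α by push_cast; ring, norm_div, norm_div, norm_pow,
    norm_pow, norm_of_nonneg hΓ.le, norm_of_nonneg hΓα.le]
  calc ‖x‖ ^ (k + 1) / Gamma (α * k + β + α)
      = ‖x‖ * (Gamma (α * k + β) / Gamma (α * k + β + α)) * (‖x‖ ^ k / Gamma (α * k + β)) := by
        field_simp; ring
    _ ≤ 1 / 2 * (‖x‖ ^ k / Gamma (α * k + β)) := by gcongr

-- At `x = 0` both sides vanish, since `Gamma 0 = 0`.
theorem div_Gamma_add_one (x : ℝ) : x / Gamma (x + 1) = (Gamma x)⁻¹ := by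
  rcases eq_or_ne x 0 with rfl | hx
  · simp
  · rw [Gamma_add_one hx, div_mul_cancel_left₀ hx]

theorem integral_rpow_mul_rpow_sub {p q t : ℝ} (hp : 0 < p) (hq : 0 < q) (ht : 0 < t) :
    ∫ s in (0 : ℝ)..t, s ^ (p - 1) * (t - s) ^ (q - 1) =
      t ^ (p + q - 1) * (Gamma p * Gamma q / Gamma (p + q)) := by
  have hΓ : Complex.Gamma (p + q) ≠ 0 := by
    rw [← Complex.ofReal_add, Complex.Gamma_ofReal, Complex.ofReal_ne_zero]
    exact (Gamma_pos_of_pos (add_pos hp hq)).ne'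
  have hB :
      Complex.betaIntegral p q = Complex.Gamma p * Complex.Gamma q / Complex.Gamma (p + q) := by
    rw [Complex.Gamma_mul_Gamma_eq_betaIntegral (by simpa) (by simpa), mul_div_cancel_left₀ _ hΓ]
  apply Complex.ofReal_injective
  calc ((∫ s in (0 : ℝ)..t, s ^ (p - 1) * (t - s) ^ (q - 1) : ℝ) : ℂ)
      = ∫ s in (0 : ℝ)..t, (s : ℂ) ^ ((p : ℂ) - 1) * ((t : ℂ) - s) ^ ((q : ℂ) - 1) := by
        rw [← intervalIntegral.integral_ofReal]
        refine intervalIntegral.integral_congr fun s hs => ?_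
        rw [uIcc_of_le ht.le] at hs
        push_cast [Complex.ofReal_cpow hs.1, Complex.ofReal_cpow (sub_nonneg.2 hs.2)]
        rfl
    _ = (t : ℂ) ^ ((p : ℂ) + q - 1) * Complex.betaIntegral p q := Complex.betaIntegral_scaled _ _ ht
    _ = _ := by
        rw [hB]
        push_cast [Complex.ofReal_cpow ht.le, ← Complex.Gamma_ofReal]
        ring

theorem intervalIntegrable_rpow_mul_rpow_sub {p q t : ℝ} (hp : 0 < p) (hq : 0 < q) (ht : 0 < t) :
    IntervalIntegrable (fun s => s ^ (p - 1) * (t - s) ^ (q - 1)) volume 0 t := by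
  refine intervalIntegral.intervalIntegrable_of_integral_ne_zero ?_
  rw [integral_rpow_mul_rpow_sub hp hq ht]
  have := Gamma_pos_of_pos hp
  have := Gamma_pos_of_pos hq
  have := Gamma_pos_of_pos (add_pos hp hq)
  positivity

end Real

theorem integral_tsum_mul_of_nonneg {X : Type*} [MeasurableSpace X] {μ : Measure X}
    {c : ℕ → ℝ} {G : ℕ → X → ℝ} (hG : ∀ k, Integrable (G k) μ) (hG0 : ∀ k, 0 ≤ᵐ[μ] G k)
    (hc : Summable fun k => |c k| * ∫ x, G k x ∂μ) :
    ∫ x, ∑' k, c k * G k x ∂μ = ∑' k, c k * ∫ x, G k x ∂μ := by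
  have hnorm : ∀ k, ∫ x, ‖c k * G k x‖ ∂μ = |c k| * ∫ x, G k x ∂μ := fun k => by
    rw [← integral_const_mul]
    refine integral_congr_ae ?_
    filter_upwards [hG0 k] with x hx
    simp [abs_of_nonneg hx]
  simp_rw [← integral_const_mul]
  exact (integral_tsum_of_summable_integral_norm (fun k => (hG k).const_mul (c k))
    (by simpa only [hnorm] using hc)).symm

theorem mul_rpow_pow {u : ℝ} (hu : 0 ≤ u) (c α : ℝ) (k : ℕ) :
    (c * u ^ α) ^ k = c ^ k * u ^ (α * k) := by
  rw [mul_pow, rpow_mul_natCast hu]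

theorem rpow_sub_one_le_of_mem_Ioo {s y p : ℝ} (hp : 0 ≤ p) (hy : y ∈ Ioo (s / 2) (2 * s)) :
    y ^ (p - 1) ≤ 2 / s * (2 * s) ^ p := by
  have hs : 0 < s := by linarith [hy.1, hy.2]
  have hy0 : 0 < y := by linarith [hy.1]
  rw [rpow_sub_one hy0.ne']
  calc y ^ p / y ≤ (2 * s) ^ p / (s / 2) :=
        div_le_div₀ (by positivity) (rpow_le_rpow hy0.le hy.2.le hp) (by positivity) hy.1.le
    _ = 2 / s * (2 * s) ^ p := by field_simp

section MittagLeffler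

variable {α : ℝ}

theorem hasSum_mittagLeffler_mul_rpow_sub_one (hα0 : 0 < α) (hα1 : α < 1) (c : ℝ) {u : ℝ}
    (hu : 0 ≤ u) :
    HasSum (fun k : ℕ => c ^ (k + 1) / Gamma (α * (k + 1) + 1) * u ^ (α * (k + 1)))
      (mittagLeffler α (c * u ^ α) - 1) := by
  have h := (hasSum_nat_add_iff' 1).2 (summable_pow_div_Gamma_mul_add hα0 hα1 1 (c * u ^ α)).hasSum
  rw [Finset.sum_range_one, ← mittagLeffler] at h
  refine (by simpa using h : HasSum _ _).congr_fun fun k => ?_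
  rw [mul_rpow_pow hu]
  push_cast
  ring

theorem hasDerivAt_mittagLeffler_mul_rpow (hα0 : 0 < α) (hα1 : α < 1) (c : ℝ) {s : ℝ}
    (hs : 0 < s) :
    HasDerivAt (fun u => mittagLeffler α (c * u ^ α))
      (∑' k : ℕ, c ^ (k + 1) / Gamma (α * (k + 1)) * s ^ (α * (k + 1) - 1)) s := by
  have hp : ∀ k : ℕ, 0 < α * (k + 1) := fun k => by positivity
  have hterm : ∀ (k : ℕ) {y : ℝ}, 0 < y →
      HasDerivAt (fun u => c ^ (k + 1) / Gamma (α * (k + 1) + 1) * u ^ (α * (k + 1)))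
        (c ^ (k + 1) / Gamma (α * (k + 1)) * y ^ (α * (k + 1) - 1)) y := fun k y hy =>
    ((hasDerivAt_rpow_const (p := α * (k + 1)) (Or.inl hy.ne')).const_mul _).congr_deriv (by
      rw [div_eq_mul_inv _ (Gamma (α * (k + 1))), ← div_Gamma_add_one]
      ring)
  set x := |c| * (2 * s) ^ α
  have hsummable : Summable fun k : ℕ => 2 / s * (x ^ (k + 1) / Gamma (α * (k + 1))) := by
    have h := (summable_nat_add_iff 1).2 (summable_pow_div_Gamma_mul_add hα0 hα1 0 x)
    push_cast at h
    simpa using h.mul_left (2 / s)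
  have hbound : ∀ (k : ℕ), ∀ y ∈ Ioo (s / 2) (2 * s),
      ‖c ^ (k + 1) / Gamma (α * (k + 1)) * y ^ (α * (k + 1) - 1)‖ ≤
        2 / s * (x ^ (k + 1) / Gamma (α * (k + 1))) := fun k y hy => by
    have hΓ := Gamma_pos_of_pos (hp k)
    calc ‖c ^ (k + 1) / Gamma (α * (k + 1)) * y ^ (α * (k + 1) - 1)‖
        = |c| ^ (k + 1) / Gamma (α * (k + 1)) * y ^ (α * (k + 1) - 1) := by
          rw [norm_mul, norm_div, norm_pow, norm_eq_abs, norm_of_nonneg hΓ.le,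
            norm_of_nonneg (rpow_nonneg (by linarith [hy.1]) _)]
      _ ≤ |c| ^ (k + 1) / Gamma (α * (k + 1)) * (2 / s * (2 * s) ^ (α * (k + 1))) := by
          gcongr
          exact rpow_sub_one_le_of_mem_Ioo (hp k).le hy
      _ = _ := by
          rw [mul_rpow_pow (by positivity)]
          push_cast
          ring
  have hsT : s ∈ Ioo (s / 2) (2 * s) := ⟨by linarith, by linarith⟩
  have hseries := hasDerivAt_tsum_of_isPreconnected hsummable isOpen_Ioo
    (convex_Ioo _ _).isPreconnected (fun k y hy => hterm k (by linarith [hy.1] : 0 < y)) hbound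
    hsT (hasSum_mittagLeffler_mul_rpow_sub_one hα0 hα1 c hs.le).summable hsT
  refine (hseries.const_add 1).congr_of_eventuallyEq ?_
  filter_upwards [lt_mem_nhds hs] with u hu
  rw [(hasSum_mittagLeffler_mul_rpow_sub_one hα0 hα1 c hu.le).tsum_eq]
  ring

variable {t : ℝ}

theorem div_Gamma_mul_integral_rpow_mul_sub_rpow_neg (hα0 : 0 < α) (hα1 : α < 1) (ht : 0 < t)
    (c : ℝ) (k : ℕ) :
    c ^ (k + 1) / Gamma (α * (k + 1)) *
        ∫ s in Ioc 0 t, s ^ (α * (k + 1) - 1) * (t - s) ^ (-α) =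
      Gamma (1 - α) * (c * ((c * t ^ α) ^ k / Gamma (α * k + 1))) := by
  have hp : 0 < α * (k + 1) := by positivity
  have hbeta := integral_rpow_mul_rpow_sub hp (by linarith : 0 < 1 - α) ht
  rw [intervalIntegral.integral_of_le ht.le, show 1 - α - 1 = -α by ring,
    show α * (k + 1) + (1 - α) - 1 = α * k by ring,
    show α * (k + 1) + (1 - α) = α * k + 1 by ring] at hbeta
  have := Gamma_pos_of_pos hp
  rw [hbeta, mul_rpow_pow ht.le]
  field_simp
  ring

theorem integral_sub_rpow_neg_mul_deriv_mittagLeffler_mul_rpow (hα0 : 0 < α) (hα1 : α < 1)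
    (ht : 0 < t) (c : ℝ) :
    ∫ s in Ioc 0 t, (t - s) ^ (-α) * deriv (fun u => mittagLeffler α (c * u ^ α)) s =
      Gamma (1 - α) * (c * mittagLeffler α (c * t ^ α)) := by
  set G : ℕ → ℝ → ℝ := fun k s => s ^ (α * (k + 1) - 1) * (t - s) ^ (-α)
  have hG : ∀ k, Integrable (G k) (volume.restrict (Ioc 0 t)) := fun k => by
    have h := intervalIntegrable_rpow_mul_rpow_sub (by positivity : 0 < α * (k + 1))
      (by linarith : 0 < 1 - α) ht
    rwa [show 1 - α - 1 = -α by ring, intervalIntegrable_iff_integrableOn_Ioc_of_le ht.le] at h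
  have hG0 : ∀ k, 0 ≤ᵐ[volume.restrict (Ioc 0 t)] G k := fun k => by
    filter_upwards [ae_restrict_mem measurableSet_Ioc] with s hs
    exact mul_nonneg (rpow_nonneg hs.1.le _) (rpow_nonneg (sub_nonneg.2 hs.2) _)
  have hsummable : Summable fun k : ℕ =>
      |c ^ (k + 1) / Gamma (α * (k + 1))| * ∫ s in Ioc 0 t, G k s := by
    refine (((summable_pow_div_Gamma_mul_add hα0 hα1 1 (|c| * t ^ α)).mul_left |c|).mul_left
      (Gamma (1 - α))).congr fun k => ?_
    rw [abs_div, abs_pow, abs_of_pos (Gamma_pos_of_pos (by positivity)),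
      div_Gamma_mul_integral_rpow_mul_sub_rpow_neg hα0 hα1 ht]
  calc ∫ s in Ioc 0 t, (t - s) ^ (-α) * deriv (fun u => mittagLeffler α (c * u ^ α)) s
      = ∫ s in Ioc 0 t, ∑' k : ℕ, c ^ (k + 1) / Gamma (α * (k + 1)) * G k s := by
        refine setIntegral_congr_fun measurableSet_Ioc fun s hs => ?_
        rw [(hasDerivAt_mittagLeffler_mul_rpow hα0 hα1 c hs.1).deriv, ← tsum_mul_left]
        exact tsum_congr fun k => by ring
    _ = ∑' k : ℕ, c ^ (k + 1) / Gamma (α * (k + 1)) * ∫ s in Ioc 0 t, G k s :=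
        integral_tsum_mul_of_nonneg hG hG0 hsummable
    _ = ∑' k : ℕ, Gamma (1 - α) * (c * ((c * t ^ α) ^ k / Gamma (α * k + 1))) :=
        tsum_congr fun k => div_Gamma_mul_integral_rpow_mul_sub_rpow_neg hα0 hα1 ht c k
    _ = Gamma (1 - α) * (c * mittagLeffler α (c * t ^ α)) := by
        rw [tsum_mul_left, tsum_mul_left, mittagLeffler]

end MittagLeffler

theorem caputo_mittagLeffler (α lam : ℝ) (hα : 0 < α) (hα1 : α < 1) :
    ∀ t : ℝ, 0 < t →
      caputoDeriv α (fun u => mittagLeffler α (lam * u ^ α)) t =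
        lam * mittagLeffler α (lam * t ^ α) := by
  intro t ht
  have hΓ : 0 < Gamma (1 - α) := Gamma_pos_of_pos (by linarith)
  rw [caputoDeriv, intervalIntegral.integral_of_le ht.le,
    integral_sub_rpow_neg_mul_deriv_mittagLeffler_mul_rpow hα hα1 ht]
  field_simp
end

section
/- The Laguerre polynomials Lₙ(x) = (eˣ/n!) dⁿ/dxⁿ (e^(-x) xⁿ) satisfy the orthogonality relation ∫₀^∞ e^(-x) Lₘ(x) Lₙ(x) dx = 0 for m ≠ n, and ∫₀^∞ e^(-x) Lₙ(x)² dx = 1. -/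
/-!
Leibniz' rule turns the Rodrigues formula into `Lₙ(x) = ∑ₖ (-1)ᵏ C(n,k) xᵏ / k!`, and the Gamma
integral `∫₀^∞ e^{-x} xᵏ dx = k!` turns every integral into an alternating binomial sum. Such a sum
`∑ₖ (-1)ᵏ C(n,k) f(k)` is `(-1)ⁿ Δⁿf(0)`, and for `f(k) = C(k + j, j)` this gives the moments
`∫₀^∞ e^{-x} xʲ Lₙ(x) dx = (-1)ⁿ j! C(j,n)`: they vanish for `j < n`, and for `j = n` they pair
with the leading coefficient `(-1)ⁿ/n!` of `Lₙ` to give norm `1`.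
-/

open MeasureTheory Real Finset

/-- The `n`th Laguerre polynomial (equal to `(eˣ/n!) dⁿ/dxⁿ (e^{-x} xⁿ)`). -/
noncomputable def laguerre (n : ℕ) (x : ℝ) : ℝ :=
  (Real.exp x / (n.factorial : ℝ)) * iteratedDeriv n (fun y => Real.exp (-y) * y ^ n) x

theorem sum_neg_one_pow_mul_choose_mul_eq_fwdDiff_iter {R : Type*} [CommRing R] (n : ℕ)
    (f : ℕ → R) :
    ∑ k ∈ range (n + 1), (-1) ^ k * n.choose k * f k = (-1) ^ n * (fwdDiff 1)^[n] f 0 := by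
  rw [fwdDiff_iter_eq_sum_shift, mul_sum]
  refine sum_congr rfl fun k hk => ?_
  have hkn : n + (n - k) = k + 2 * (n - k) := by have := mem_range.mp hk; omega
  rw [zsmul_eq_mul, zero_add, smul_eq_mul, mul_one]
  push_cast
  rw [← mul_assoc, ← mul_assoc, ← pow_add, hkn, pow_add, pow_mul, neg_one_sq, one_pow, mul_one]

theorem fwdDiff_iter_choose_apply (n j y : ℕ) :
    (fwdDiff 1)^[n] (fun x ↦ x.choose j : ℕ → ℤ) y = if n ≤ j then y.choose (j - n) else 0 := by
  split_ifs with h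
  · obtain ⟨i, rfl⟩ := Nat.exists_eq_add_of_le h
    rw [fwdDiff_iter_choose, Nat.add_sub_cancel_left]
  · obtain ⟨i, rfl⟩ := Nat.exists_eq_add_of_lt (not_le.mp h)
    have hconst := fwdDiff_iter_choose 0 j
    rw [add_zero] at hconst
    rw [add_assoc, add_comm, Function.iterate_add_apply, Function.iterate_succ_apply, hconst]
    simp only [Nat.choose_zero_right, Nat.cast_one, fwdDiff_const]
    exact congrFun (Function.iterate_fixed (fwdDiff_const 1 0) i) y

theorem sum_neg_one_pow_mul_choose_mul_choose (n m : ℕ) :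
    ∑ k ∈ range (n + 1), (-1 : ℤ) ^ k * n.choose k * k.choose m
      = if n = m then (-1) ^ n else 0 := by
  rw [sum_neg_one_pow_mul_choose_mul_eq_fwdDiff_iter n (fun k => (k.choose m : ℤ)),
    fwdDiff_iter_choose_zero]
  split_ifs <;> simp

theorem sum_neg_one_pow_mul_choose_mul_add_choose (n j : ℕ) :
    ∑ k ∈ range (n + 1), (-1 : ℤ) ^ k * n.choose k * (k + j).choose j
      = (-1) ^ n * j.choose n := by
  have hshift := fwdDiff_iter_comp_add 1 (fun x => (x.choose j : ℤ)) j n 0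
  beta_reduce at hshift
  rw [sum_neg_one_pow_mul_choose_mul_eq_fwdDiff_iter n (fun k => ((k + j).choose j : ℤ)), hshift,
    fwdDiff_iter_choose_apply, zero_add]
  split_ifs with h
  · rw [Nat.choose_symm h]
  · rw [Nat.choose_eq_zero_of_lt (not_le.mp h), Nat.cast_zero]

noncomputable def laguerreCoeff (n k : ℕ) : ℝ := (-1) ^ k * n.choose k / k.factorial

theorem iteratedDeriv_exp_neg (n : ℕ) (x : ℝ) :
    iteratedDeriv n (fun y => exp (-y)) x = (-1) ^ n * exp (-x) := by
  simpa using congrFun (iteratedDeriv_exp_const_mul n (-1)) x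

theorem laguerre_eq_sum (n : ℕ) (x : ℝ) :
    laguerre n x = ∑ k ∈ range (n + 1), laguerreCoeff n k * x ^ k := by
  rw [laguerre, iteratedDeriv_fun_mul (by fun_prop) (by fun_prop), mul_sum]
  refine sum_congr rfl fun k hk => ?_
  have hkn : k ≤ n := Nat.lt_succ_iff.mp (mem_range.mp hk)
  have hfact : ((n - (n - k)).factorial : ℝ) * n.descFactorial (n - k) = n.factorial := by
    exact_mod_cast Nat.factorial_mul_descFactorial (Nat.sub_le n k)
  rw [Nat.sub_sub_self hkn] at hfact
  rw [iteratedDeriv_exp_neg, iteratedDeriv_pow, Nat.sub_sub_self hkn, laguerreCoeff, ← hfact,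
    exp_neg]
  field_simp

theorem integrableOn_exp_neg_mul_pow (k : ℕ) :
    IntegrableOn (fun x : ℝ => exp (-x) * x ^ k) (Set.Ioi 0) := by
  simpa [Real.rpow_natCast] using Real.GammaIntegral_convergent (s := k + 1) (by positivity)

theorem integral_exp_neg_mul_pow (k : ℕ) :
    ∫ x in Set.Ioi (0 : ℝ), exp (-x) * x ^ k = k.factorial := by
  simpa [Real.rpow_natCast, Real.Gamma_nat_eq_factorial] using
    (Real.Gamma_eq_integral (s := k + 1) (by positivity)).symm

theorem integral_exp_neg_mul_sum_pow {ι : Type*} (s : Finset ι) (c : ι → ℝ) (e : ι → ℕ) :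
    ∫ x in Set.Ioi (0 : ℝ), exp (-x) * ∑ i ∈ s, c i * x ^ e i
      = ∑ i ∈ s, c i * (e i).factorial := by
  simp_rw [mul_sum, mul_left_comm (exp _)]
  rw [integral_finsetSum _ fun i _ => (integrableOn_exp_neg_mul_pow (e i)).const_mul (c i)]
  simp_rw [integral_const_mul, integral_exp_neg_mul_pow]

theorem sum_laguerreCoeff_mul_factorial_add (n j : ℕ) :
    ∑ k ∈ range (n + 1), laguerreCoeff n k * (k + j).factorial
      = (-1) ^ n * j.choose n * j.factorial := by
  have h := congrArg (fun z : ℤ => (z : ℝ) * j.factorial)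
    (sum_neg_one_pow_mul_choose_mul_add_choose n j)
  push_cast at h
  rw [← h, sum_mul]
  refine sum_congr rfl fun k _ => ?_
  have hfact : ((k + j).choose j : ℝ) * k.factorial * j.factorial = (k + j).factorial := by
    exact_mod_cast Nat.add_choose_mul_factorial_mul_factorial k j
  rw [laguerreCoeff, ← hfact]
  field_simp

theorem integral_exp_neg_mul_laguerre_mul_laguerre (m n : ℕ) :
    ∫ x in Set.Ioi (0 : ℝ), exp (-x) * laguerre m x * laguerre n x = if m = n then 1 else 0 := by
  have hexpand : ∀ x, exp (-x) * laguerre m x * laguerre n x = exp (-x) *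
      ∑ p ∈ range (m + 1) ×ˢ range (n + 1),
        laguerreCoeff m p.1 * laguerreCoeff n p.2 * x ^ (p.2 + p.1) := by
    intro x
    rw [laguerre_eq_sum, laguerre_eq_sum, mul_assoc, sum_mul_sum, sum_product]
    congr 1
    exact sum_congr rfl fun _ _ => sum_congr rfl fun _ _ => by ring
  simp_rw [hexpand, integral_exp_neg_mul_sum_pow, sum_product, mul_assoc, ← mul_sum,
    sum_laguerreCoeff_mul_factorial_add]
  have h := congrArg (fun z : ℤ => (z : ℝ)) (sum_neg_one_pow_mul_choose_mul_choose m n)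
  push_cast at h
  calc ∑ j ∈ range (m + 1), laguerreCoeff m j * ((-1) ^ n * j.choose n * j.factorial)
      = (-1) ^ n * ∑ j ∈ range (m + 1), (-1 : ℝ) ^ j * m.choose j * j.choose n := by
        rw [mul_sum]
        refine sum_congr rfl fun j _ => ?_
        rw [laguerreCoeff]
        field_simp
    _ = if m = n then 1 else 0 := by
        rw [h]
        split_ifs with hmn
        · rw [hmn, ← mul_pow]; norm_num
        · rw [mul_zero]

theorem laguerre_orthonormal (m n : ℕ) :
    (m ≠ n → ∫ x in Set.Ioi (0:ℝ), Real.exp (-x) * laguerre m x * laguerre n x = 0) ∧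
    (∫ x in Set.Ioi (0:ℝ), Real.exp (-x) * laguerre n x * laguerre n x = 1) := by
  rw [integral_exp_neg_mul_laguerre_mul_laguerre, integral_exp_neg_mul_laguerre_mul_laguerre]
  exact ⟨fun hmn => if_neg hmn, if_pos rfl⟩
end
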